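/- arXiv:math/0202306 — 4 statements merged into one kernel-verified Lean document; each statement's English description precedes it below -/
import Mathlib

section
/- Let A be a Banach algebra and let (G, 𝔄) be a Gelfand theory for A. Then for every a ∈ A, the element G(a) is quasi-invertible in the subalgebra G(A) if and only if G(a) is quasi-invertible in 𝔄. -/
open scoped Pointwise

/-- A `ℂ`-submodule `L` of a (possibly non-unital) algebra `A` is a left ideal if it is
closed under left multiplication by arbitrary elements of `A`. -/
def IsLeftIdeal {A : Type*} [NonUnitalNonAssocRing A] [Module ℂ A]
    (L : Submodule ℂ A) : Prop :=
  ∀ a : A, ∀ x ∈ L, a * x ∈ L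

/-- A left ideal `L` is modular if there is a right modular identity `u`,
i.e. `a * u - a ∈ L` for all `a`. -/
def IsModularLeft {A : Type*} [NonUnitalNonAssocRing A] [Module ℂ A]
    (L : Submodule ℂ A) : Prop :=
  ∃ u : A, ∀ a : A, a * u - a ∈ L

/-- `L` is a maximal modular left ideal: a proper modular left ideal which is maximal among
proper left ideals. -/
def IsMaximalModularLeftIdeal {A : Type*} [NonUnitalNonAssocRing A] [Module ℂ A]
    (L : Submodule ℂ A) : Prop :=
  IsLeftIdeal L ∧ IsModularLeft L ∧ L ≠ ⊤ ∧
    ∀ M : Submodule ℂ A, IsLeftIdeal M → M ≠ ⊤ → L ≤ M → M = L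

/-- `(G, 𝔄)` is a Gelfand theory for `A`:
(G1) `𝔄` is a C*-algebra and `G : A → 𝔄` is an algebra homomorphism;
(G2) `L ↦ G⁻¹(L)` is a bijection between the maximal modular left ideals of `𝔄` and of `A`;
(G3) for each maximal modular left ideal `L` of `𝔄`, the induced map `A/G⁻¹(L) → 𝔄/L` has
dense range; equivalently (via the open quotient map `𝔄 → 𝔄/L`), the set `G(A) + L` is
dense in `𝔄`. -/
def IsGelfandTheory {A 𝔄 : Type*}
    [NonUnitalNormedRing A] [NormedSpace ℂ A] [IsScalarTower ℂ A A] [SMulCommClass ℂ A A]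
    [NonUnitalNormedRing 𝔄] [StarRing 𝔄] [CStarRing 𝔄] [NormedSpace ℂ 𝔄]
    [IsScalarTower ℂ 𝔄 𝔄] [SMulCommClass ℂ 𝔄 𝔄] [StarModule ℂ 𝔄] [CompleteSpace 𝔄]
    (G : A →ₙₐ[ℂ] 𝔄) : Prop :=
  Set.BijOn (fun L : Submodule ℂ 𝔄 => L.comap (G : A →ₗ[ℂ] 𝔄))
      {L | IsMaximalModularLeftIdeal L} {L | IsMaximalModularLeftIdeal L} ∧
    ∀ L : Submodule ℂ 𝔄, IsMaximalModularLeftIdeal L →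
      Dense (Set.range ⇑G + (L : Set 𝔄))

/-!
If `a` had no left quasi-inverse, the proper modular left ideal `{c a - c}` would lie in a maximal
modular left ideal `M`, and (G2) gives `M = G⁻¹(L)` for a maximal modular left ideal `L` of `𝔄`.
If `G a` has a quasi-inverse `y` in `𝔄`, then `w ↦ w - w G a` (right multiplication by the unit
`1 - G a` of the unitization) is a linear bijection commuting with left multiplications, so it
pulls `L` back to a maximal modular left ideal `L₀`. But `G c - G c G a = -G (c a - c) ∈ L`, so
`G⁻¹(L₀) = A`, which is not proper, contradicting (G2). Hence `a` has a left quasi-inverse `b`,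
and `G b`, a left quasi-inverse of `G a`, must be its quasi-inverse `y`.
-/

section LeftIdeal

variable {R : Type*} [NonUnitalRing R] [Module ℂ R]

theorem IsLeftIdeal.eq_top_of_modularUnit_mem {L : Submodule ℂ R} (hL : IsLeftIdeal L) {u : R}
    (hu : ∀ a, a * u - a ∈ L) (huL : u ∈ L) : L = ⊤ :=
  Submodule.eq_top_iff'.2 fun a => by simpa using L.sub_mem (hL a u huL) (hu a)

theorem IsLeftIdeal.comap {L : Submodule ℂ R} (hL : IsLeftIdeal L) {f : R →ₗ[ℂ] R}
    (hf : ∀ a w, f (a * w) = a * f w) : IsLeftIdeal (L.comap f) := fun a w hw => by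
  simpa only [Submodule.mem_comap, hf] using hL a _ hw

theorem exists_isMaximalModularLeftIdeal_le {L : Submodule ℂ R} (hL : IsLeftIdeal L) {u : R}
    (hu : ∀ a, a * u - a ∈ L) (huL : u ∉ L) :
    ∃ M, IsMaximalModularLeftIdeal M ∧ L ≤ M := by
  obtain ⟨M, hLM, ⟨hMideal, huM, -⟩, hMmax⟩ :=
    zorn_le_nonempty₀ {I | IsLeftIdeal I ∧ u ∉ I ∧ L ≤ I} (fun c hcS hc I hI => by
      have hmem {w : R} : w ∈ sSup c → ∃ J ∈ c, w ∈ J :=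
        (Submodule.mem_sSup_of_directed ⟨I, hI⟩ hc.directedOn).1
      refine ⟨sSup c, ⟨fun a w hw => ?_, fun hu => ?_, (hcS hI).2.2.trans (le_sSup hI)⟩,
        fun J hJ => le_sSup hJ⟩
      · obtain ⟨J, hJ, hwJ⟩ := hmem hw
        exact le_sSup hJ ((hcS hJ).1 a w hwJ)
      · obtain ⟨J, hJ, huJ⟩ := hmem hu
        exact (hcS hJ).2.1 huJ) L ⟨hL, huL, le_rfl⟩
  refine ⟨M, ⟨hMideal, ⟨u, fun a => hLM (hu a)⟩, fun h => huM (h ▸ trivial), ?_⟩, hLM⟩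
  intro N hN hNtop hMN
  have huN : u ∉ N := fun huN =>
    hNtop (hN.eq_top_of_modularUnit_mem (fun a => hMN (hLM (hu a))) huN)
  exact le_antisymm (hMmax ⟨hN, huN, hLM.trans hMN⟩ hMN) hMN

theorem exists_isMaximalModularLeftIdeal_of_no_leftQuasiInverse [IsScalarTower ℂ R R] {x : R}
    (hx : ∀ b : R, x + b - b * x ≠ 0) :
    ∃ M, IsMaximalModularLeftIdeal M ∧ ∀ c, c * x - c ∈ M := by
  let J := LinearMap.range (LinearMap.mulRight ℂ x - LinearMap.id)
  have hJ : ∀ c, c * x - c ∈ J := fun c => ⟨c, rfl⟩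
  have hJideal : IsLeftIdeal J := by
    rintro a _ ⟨c, rfl⟩
    simpa [mul_sub, mul_assoc] using hJ (a * c)
  have hxJ : x ∉ J := by
    rintro ⟨b, hb⟩
    simp only [LinearMap.sub_apply, LinearMap.mulRight_apply, LinearMap.id_apply] at hb
    exact hx b (by rw [show x + b - b * x = x - (b * x - b) by abel, hb, sub_self])
  obtain ⟨M, hM, hJM⟩ := exists_isMaximalModularLeftIdeal_le hJideal hJ hxJ
  exact ⟨M, hM, fun c => hJM (hJ c)⟩

end LeftIdeal

section QuasiInverse

variable {R : Type*} [NonUnitalRing R]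

theorem leftQuasiInverse_eq_rightQuasiInverse {q b y : R} (hb : q + b - b * q = 0)
    (hy : q + y - q * y = 0) : b = y :=
  calc b = b + (q + y - q * y) - b * (q + y - q * y) := by rw [hy, mul_zero, add_zero, sub_zero]
    _ = (q + b - b * q) + y - (q + b - b * q) * y := by noncomm_ring
    _ = y := by rw [hb, zero_mul, zero_add, sub_zero]

theorem sub_mul_sub_mul_eq_self {p r : R} (h : p + r - r * p = 0) (w : R) :
    w - w * r - (w - w * r) * p = w :=
  calc w - w * r - (w - w * r) * p = w - w * (p + r - r * p) := by noncomm_ring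
    _ = w := by rw [h, mul_zero, sub_zero]

variable [Module ℂ R] [IsScalarTower ℂ R R] {q y : R}

def oneSubMulRightEquiv (hqy : q + y - q * y = 0) (hyq : q + y - y * q = 0) : R ≃ₗ[ℂ] R :=
  .ofLinearMap (LinearMap.id - LinearMap.mulRight ℂ q) (LinearMap.id - LinearMap.mulRight ℂ y)
    (LinearMap.ext fun w => by simpa using sub_mul_sub_mul_eq_self hyq w)
    (LinearMap.ext fun w => by
      simpa using sub_mul_sub_mul_eq_self (by rw [add_comm, hqy] : y + q - q * y = 0) w)

theorem oneSubMulRightEquiv_apply (hqy : q + y - q * y = 0) (hyq : q + y - y * q = 0) (w : R) :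
    oneSubMulRightEquiv hqy hyq w = w - w * q := rfl

theorem IsMaximalModularLeftIdeal.comap_oneSubMulRightEquiv {L : Submodule ℂ R}
    (hL : IsMaximalModularLeftIdeal L) (hqy : q + y - q * y = 0) (hyq : q + y - y * q = 0) :
    IsMaximalModularLeftIdeal (L.comap (oneSubMulRightEquiv hqy hyq : R →ₗ[ℂ] R)) := by
  set e := oneSubMulRightEquiv hqy hyq
  obtain ⟨hLideal, ⟨u, hu⟩, hLtop, hLmax⟩ := hL
  have he : ∀ a w, e (a * w) = a * e w := fun a w => by
    simp only [e, oneSubMulRightEquiv_apply, mul_sub, mul_assoc]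
  have he_symm : ∀ a w, e.symm (a * w) = a * e.symm w := fun a w => by
    rw [e.symm_apply_eq, he, e.apply_symm_apply]
  refine ⟨hLideal.comap he, ⟨u + y - u * y, fun w => ?_⟩, fun h => hLtop ?_, ?_⟩
  · -- `(w u₀ - w)(1 - q) = -w (1 - u)(1 - y)(1 - q) = w u - w` with `1 - u₀ = (1 - u)(1 - y)`
    have hcalc : e (w * (u + y - u * y) - w) = w * u - w + (w - w * u) * (q + y - y * q) := by
      rw [oneSubMulRightEquiv_apply]
      noncomm_ring
    rw [Submodule.mem_comap, LinearEquiv.coe_coe, hcalc, hyq, mul_zero, add_zero]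
    exact hu w
  · exact Submodule.eq_top_iff'.2 fun l => by
      simpa using (h ▸ Submodule.mem_top : e.symm l ∈ L.comap (e : R →ₗ[ℂ] R))
  · intro N hN hNtop hLN
    have hN' : N.comap (e.symm : R →ₗ[ℂ] R) = L := by
      refine hLmax _ (hN.comap he_symm) (fun h => hNtop ?_) (fun l hl => hLN ?_)
      · exact Submodule.eq_top_iff'.2 fun n => by
          simpa using (h ▸ Submodule.mem_top : e n ∈ N.comap (e.symm : R →ₗ[ℂ] R))
      · simpa [Submodule.mem_comap] using hl
    ext n
    rw [← hN', Submodule.mem_comap, Submodule.mem_comap]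
    simp

end QuasiInverse

theorem IsGelfandTheory.exists_leftQuasiInverse {A 𝔄 : Type*}
    [NonUnitalNormedRing A] [NormedSpace ℂ A] [IsScalarTower ℂ A A] [SMulCommClass ℂ A A]
    [NonUnitalNormedRing 𝔄] [StarRing 𝔄] [CStarRing 𝔄] [NormedSpace ℂ 𝔄]
    [IsScalarTower ℂ 𝔄 𝔄] [SMulCommClass ℂ 𝔄 𝔄] [StarModule ℂ 𝔄] [CompleteSpace 𝔄]
    {G : A →ₙₐ[ℂ] 𝔄} (hG : IsGelfandTheory G) {x : A} {y : 𝔄}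
    (hqy : G x + y - G x * y = 0) (hyq : G x + y - y * G x = 0) :
    ∃ b : A, x + b - b * x = 0 := by
  by_contra! hx
  obtain ⟨M, hM, hxM⟩ := exists_isMaximalModularLeftIdeal_of_no_leftQuasiInverse hx
  obtain ⟨L, hL, rfl⟩ := hG.1.2.2 hM
  have hL₀ := hL.comap_oneSubMulRightEquiv hqy hyq
  refine (hG.1.1 hL₀).2.2.1 (Submodule.eq_top_iff'.2 fun c => ?_)
  simpa [oneSubMulRightEquiv_apply] using L.neg_mem (hxM c)

theorem stmt_4_general {A 𝔄 : Type*}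
    [NonUnitalNormedRing A] [NormedSpace ℂ A] [IsScalarTower ℂ A A] [SMulCommClass ℂ A A]
    [NonUnitalNormedRing 𝔄] [StarRing 𝔄] [CStarRing 𝔄] [NormedSpace ℂ 𝔄]
    [IsScalarTower ℂ 𝔄 𝔄] [SMulCommClass ℂ 𝔄 𝔄] [StarModule ℂ 𝔄] [CompleteSpace 𝔄]
    (G : A →ₙₐ[ℂ] 𝔄) (hG : IsGelfandTheory G) (a : A) :
    (∃ b : A, G a + G b - G a * G b = 0 ∧ G a + G b - G b * G a = 0) ↔
      (∃ y : 𝔄, G a + y - G a * y = 0 ∧ G a + y - y * G a = 0) := by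
  refine ⟨fun ⟨b, hb⟩ => ⟨G b, hb⟩, fun ⟨y, hqy, hyq⟩ => ?_⟩
  obtain ⟨b, hb⟩ := hG.exists_leftQuasiInverse hqy hyq
  have hGb : G b = y :=
    leftQuasiInverse_eq_rightQuasiInverse (by simpa using congrArg G hb) hqy
  exact ⟨b, hGb ▸ hqy, hGb ▸ hyq⟩

/-- For a Gelfand theory `(G, 𝔄)` of a Banach algebra `A`: `G a` is quasi-invertible in
the subalgebra `G(A)` if and only if it is quasi-invertible in `𝔄`. -/
theorem stmt_4 {A 𝔄 : Type*}
    [NonUnitalNormedRing A] [NormedSpace ℂ A] [IsScalarTower ℂ A A] [SMulCommClass ℂ A A]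
    [CompleteSpace A]
    [NonUnitalNormedRing 𝔄] [StarRing 𝔄] [CStarRing 𝔄] [NormedSpace ℂ 𝔄]
    [IsScalarTower ℂ 𝔄 𝔄] [SMulCommClass ℂ 𝔄 𝔄] [StarModule ℂ 𝔄] [CompleteSpace 𝔄]
    (G : A →ₙₐ[ℂ] 𝔄) (hG : IsGelfandTheory G) (a : A) :
    (∃ b : A, G a + G b - G a * G b = 0 ∧ G a + G b - G b * G a = 0) ↔
      (∃ y : 𝔄, G a + y - G a * y = 0 ∧ G a + y - y * G a = 0) :=
  stmt_4_general G hG a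
end

section
/- Let A be a unital Banach algebra and let (G, 𝔄) be a Gelfand theory for A. Then for every a ∈ A, the spectrum of a in A equals the spectrum of G(a) in 𝔄. -/
open scoped Pointwise

/-!
A maximal modular left ideal of a unital algebra is the same as a maximal left ideal, so an
element has a left inverse exactly when it lies in no such ideal. In a Banach algebra these ideals
are closed, so density of `G(A) + L` forces the idempotent `p = 1 - G 1` into every maximal left
ideal of `𝔄`. Then `1 - p` has a left inverse `c`, and `p = c (1 - p) p = 0`, so `G` is unital
and `σ(G a) ⊆ σ(a)`. Conversely, if `G b` is invertible then `b` lies in no maximal left ideal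
`G⁻¹(L)`, so `b` has a left inverse `c`; then `G c = (G b)⁻¹` is invertible too, so `c` has a
left inverse, which must be `b`, and `b` is invertible.
-/

section LeftIdeal

variable {R : Type*} [Ring R] [Algebra ℂ R]

def IsLeftIdeal.toIdeal {M : Submodule ℂ R} (hM : IsLeftIdeal M) : Ideal R where
  carrier := M
  add_mem' := M.add_mem
  zero_mem' := M.zero_mem
  smul_mem' := hM

theorem IsLeftIdeal.restrictScalars_toIdeal {M : Submodule ℂ R} (hM : IsLeftIdeal M) :
    hM.toIdeal.restrictScalars ℂ = M :=
  rfl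

theorem isLeftIdeal_restrictScalars (I : Ideal R) : IsLeftIdeal (I.restrictScalars ℂ) :=
  fun a _ hx => I.mul_mem_left a hx

theorem isMaximalModularLeftIdeal_restrictScalars {I : Ideal R} (hI : I.IsMaximal) :
    IsMaximalModularLeftIdeal (I.restrictScalars ℂ) := by
  refine ⟨isLeftIdeal_restrictScalars I, ⟨1, fun a => by simp⟩,
    (Submodule.restrictScalars_eq_top_iff ℂ R R).not.mpr hI.ne_top, fun M hM hMtop hIM => ?_⟩
  rw [← hM.restrictScalars_toIdeal, Submodule.restrictScalars_inj]
  refine (hI.eq_of_le ?_ hIM).symm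
  rwa [Ne, ← Submodule.restrictScalars_eq_top_iff ℂ R R, hM.restrictScalars_toIdeal]

theorem IsMaximalModularLeftIdeal.isMaximal_toIdeal {L : Submodule ℂ R}
    (hL : IsMaximalModularLeftIdeal L) : hL.1.toIdeal.IsMaximal := by
  refine ⟨⟨?_, fun J hLJ => by_contra fun hJ => hLJ.ne ?_⟩⟩
  · rw [Ne, ← Submodule.restrictScalars_eq_top_iff ℂ R R, hL.1.restrictScalars_toIdeal]
    exact hL.2.2.1
  · rw [← Submodule.restrictScalars_inj ℂ, hL.1.restrictScalars_toIdeal]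
    exact (hL.2.2.2 _ (isLeftIdeal_restrictScalars J)
      ((Submodule.restrictScalars_eq_top_iff ℂ R R).not.mpr hJ) hLJ.le).symm

theorem IsMaximalModularLeftIdeal.not_isUnit_of_mem {L : Submodule ℂ R}
    (hL : IsMaximalModularLeftIdeal L) {x : R} (hx : x ∈ L) : ¬IsUnit x :=
  fun hu => hL.isMaximal_toIdeal.ne_top (Ideal.eq_top_of_isUnit_mem _ hx hu)

theorem exists_mul_eq_one_of_forall_notMem {b : R}
    (hb : ∀ L : Submodule ℂ R, IsMaximalModularLeftIdeal L → b ∉ L) : ∃ c, c * b = 1 := by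
  by_contra! hc
  have hspan : Ideal.span {b} ≠ ⊤ := fun h =>
    (Ideal.mem_span_singleton'.mp ((Ideal.eq_top_iff_one _).mp h)).elim hc
  obtain ⟨I, hI, hbI⟩ := Ideal.exists_le_maximal _ hspan
  exact hb _ (isMaximalModularLeftIdeal_restrictScalars hI) (hbI (Ideal.mem_span_singleton_self b))

theorem IsIdempotentElem.eq_zero_of_forall_mem {p : R} (hp : IsIdempotentElem p)
    (hpL : ∀ L : Submodule ℂ R, IsMaximalModularLeftIdeal L → p ∈ L) : p = 0 := by
  obtain ⟨c, hc⟩ : ∃ c, c * (1 - p) = 1 := exists_mul_eq_one_of_forall_notMem fun L hL h1p =>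
    hL.not_isUnit_of_mem (by simpa using L.add_mem h1p (hpL L hL)) isUnit_one
  calc p = c * (1 - p) * p := by rw [hc, one_mul]
    _ = 0 := by rw [mul_assoc, sub_mul, one_mul, hp.eq, sub_self, mul_zero]

theorem isUnit_of_isUnit_map {S : Type*} [Monoid S] (f : R →* S)
    (hf : ∀ L : Submodule ℂ R, IsMaximalModularLeftIdeal L → ∀ x ∈ L, ¬IsUnit (f x))
    {b : R} (hb : IsUnit (f b)) : IsUnit b := by
  obtain ⟨c, hcb⟩ := exists_mul_eq_one_of_forall_notMem fun L hL hbL => hf L hL b hbL hb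
  have hfc : IsUnit (f c) :=
    hb.unit.eq_inv_of_mul_eq_one_right (by rw [IsUnit.unit_spec, ← map_mul, hcb, map_one]) ▸
      Units.isUnit _
  obtain ⟨d, hdc⟩ := exists_mul_eq_one_of_forall_notMem fun L hL hcL => hf L hL c hcL hfc
  exact isUnit_iff_exists_and_exists.mpr ⟨⟨c, left_inv_eq_right_inv hdc hcb ▸ hdc⟩, ⟨c, hcb⟩⟩

end LeftIdeal

theorem IsMaximalModularLeftIdeal.isClosed {R : Type*} [NormedRing R] [NormedAlgebra ℂ R]
    [CompleteSpace R] {L : Submodule ℂ R} (hL : IsMaximalModularLeftIdeal L) :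
    IsClosed (L : Set R) :=
  have := hL.isMaximal_toIdeal
  Ideal.IsMaximal.isClosed (I := hL.1.toIdeal)

theorem AlgHom.spectrum_apply_eq {A B : Type*} [Ring A] [Algebra ℂ A] [Ring B] [Algebra ℂ B]
    (φ : A →ₐ[ℂ] B) (hφ : ∀ b, IsUnit (φ b) → IsUnit b) (a : A) :
    spectrum ℂ (φ a) = spectrum ℂ a := by
  refine (AlgHom.spectrum_apply_subset φ a).antisymm fun r hr hr' => hr ?_
  refine hφ _ ?_
  simpa only [spectrum.mem_resolventSet_iff, map_sub, AlgHom.commutes] using hr'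

namespace IsGelfandTheory

variable {A 𝔄 : Type*} [NormedRing A] [NormedAlgebra ℂ A]
    [NormedRing 𝔄] [StarRing 𝔄] [CStarRing 𝔄] [NormedAlgebra ℂ 𝔄]
    [StarModule ℂ 𝔄] [CompleteSpace 𝔄] {G : A →ₙₐ[ℂ] 𝔄}

theorem one_sub_map_one_mem (hG : IsGelfandTheory G) {L : Submodule ℂ 𝔄}
    (hL : IsMaximalModularLeftIdeal L) : 1 - G 1 ∈ L := by
  -- `x ↦ x - G 1 * x` maps the dense set `G(A) + L` into the closed set `L`.
  have hmaps : Set.MapsTo (fun x => x - G 1 * x) (Set.range G + (L : Set 𝔄)) L := by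
    rintro _ ⟨_, ⟨b, rfl⟩, l, hl, rfl⟩
    have hGb : G b - G 1 * G b = 0 := by rw [← map_mul, one_mul, sub_self]
    simpa [mul_add, add_sub_add_comm, hGb] using L.sub_mem hl (hL.1 (G 1) l hl)
  have hclosure := hmaps.closure (by fun_prop)
  rw [(hG.2 L hL).closure_eq, hL.isClosed.closure_eq] at hclosure
  simpa using hclosure (Set.mem_univ 1)

theorem map_one (hG : IsGelfandTheory G) : G 1 = 1 := by
  have hidem : IsIdempotentElem (G 1) := by rw [IsIdempotentElem, ← map_mul, one_mul]
  exact (sub_eq_zero.mp (hidem.one_sub.eq_zero_of_forall_mem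
    fun _ hL => hG.one_sub_map_one_mem hL)).symm

def toAlgHom (hG : IsGelfandTheory G) : A →ₐ[ℂ] 𝔄 :=
  { G with
    map_one' := hG.map_one
    commutes' := fun r => by simp [Algebra.algebraMap_eq_smul_one, hG.map_one] }

theorem isUnit_of_isUnit_map (hG : IsGelfandTheory G) {b : A} (hb : IsUnit (G b)) :
    IsUnit b := by
  refine _root_.isUnit_of_isUnit_map (hG.toAlgHom : A →* 𝔄) (fun M hM x hxM => ?_) hb
  obtain ⟨L, hL, rfl⟩ := hG.1.surjOn hM
  exact hL.not_isUnit_of_mem hxM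

end IsGelfandTheory

theorem stmt_5_general {A 𝔄 : Type*} [NormedRing A] [NormedAlgebra ℂ A]
    [NormedRing 𝔄] [StarRing 𝔄] [CStarRing 𝔄] [NormedAlgebra ℂ 𝔄]
    [StarModule ℂ 𝔄] [CompleteSpace 𝔄]
    (G : A →ₙₐ[ℂ] 𝔄) (hG : IsGelfandTheory G) (a : A) :
    spectrum ℂ a = spectrum ℂ (G a) :=
  (hG.toAlgHom.spectrum_apply_eq (fun _ => hG.isUnit_of_isUnit_map) a).symm

/-- If `A` is a unital Banach algebra and `(G, 𝔄)` a Gelfand theory for `A` (so that `𝔄`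
is necessarily unital), then `σ_A(a) = σ_𝔄(G a)` for every `a ∈ A`. -/
theorem stmt_5 {A 𝔄 : Type*} [NormedRing A] [NormedAlgebra ℂ A] [CompleteSpace A]
    [NormedRing 𝔄] [StarRing 𝔄] [CStarRing 𝔄] [NormedAlgebra ℂ 𝔄]
    [StarModule ℂ 𝔄] [CompleteSpace 𝔄]
    (G : A →ₙₐ[ℂ] 𝔄) (hG : IsGelfandTheory G) (a : A) :
    spectrum ℂ a = spectrum ℂ (G a) :=
  stmt_5_general G hG a
end

section
/- Let A be a Banach algebra and let I be a closed ideal of A. Then the map L ↦ I ∩ L is a bijection from the set {L ∈ Λ_A : I ⊄ L} of maximal modular left ideals of A not containing I onto the set Λ_I of maximal modular left ideals of I. -/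
open scoped Pointwise

/-- `L` is a maximal modular left ideal of the algebra `J` (a two-sided ideal of the
ambient algebra, with `L` expressed as a submodule of the ambient algebra contained
in `J`). -/
def IsMaximalModularLeftIdealIn {A : Type*} [NonUnitalNonAssocRing A] [Module ℂ A]
    (J L : Submodule ℂ A) : Prop :=
  L ≤ J ∧ (∀ a ∈ J, ∀ x ∈ L, a * x ∈ L) ∧ (∃ u ∈ J, ∀ a ∈ J, a * u - a ∈ L) ∧ L ≠ J ∧
    ∀ M : Submodule ℂ A, M ≤ J → (∀ a ∈ J, ∀ x ∈ M, a * x ∈ M) → M ≠ J → L ≤ M → M = L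


/-!
The inverse of `L ↦ I ∩ L` is the left colon `M ↦ (M : I) = {a | I a ⊆ M}`. If `L` is maximal
modular and `I ⊄ L`, then `I + L = A`, so writing a modular unit `u` of `L` as `v + w` with
`v ∈ I`, `w ∈ L` produces a modular unit `v ∈ I` of `I ∩ L` inside `I`; this unit keeps
`(N : I)` proper for every `N ⊇ I ∩ L` not containing `I`, whence `(N : I) = L` by maximality.
Conversely a modular unit `e` of `M` in `I` is a modular unit of `(M : I)` for all of `A`.
-/

section LeftColon

variable {A : Type*} [NonUnitalRing A] [Module ℂ A] {I L M : Submodule ℂ A}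

theorem IsLeftIdeal.eq_top_of_unit_mem {e : A} (hL : IsLeftIdeal L)
    (he : ∀ a, a * e - a ∈ L) (heL : e ∈ L) : L = ⊤ :=
  eq_top_iff.mpr fun a _ => by simpa using L.sub_mem (hL a e heL) (he a)

theorem inf_mul_mem_of_isLeftIdeal (hI : ∀ a : A, ∀ x ∈ I, a * x ∈ I ∧ x * a ∈ I)
    (hL : IsLeftIdeal L) : ∀ a ∈ I, ∀ x ∈ I ⊓ L, a * x ∈ I ⊓ L :=
  fun a _ x ⟨hxI, hxL⟩ => ⟨(hI a x hxI).1, hL a x hxL⟩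

theorem IsLeftIdeal.sup (hI : ∀ a : A, ∀ x ∈ I, a * x ∈ I ∧ x * a ∈ I)
    (hL : IsLeftIdeal L) : IsLeftIdeal (I ⊔ L) := by
  intro a x hx
  obtain ⟨y, hy, z, hz, rfl⟩ := Submodule.mem_sup.mp hx
  rw [mul_add]
  exact Submodule.add_mem_sup (hI a y hy).1 (hL a z hz)

theorem exists_modular_unit_inf (hI : ∀ a : A, ∀ x ∈ I, a * x ∈ I ∧ x * a ∈ I)
    (hL : IsMaximalModularLeftIdeal L) (hIL : ¬ I ≤ L) :
    ∃ v ∈ I, ∀ a ∈ I, a * v - a ∈ I ⊓ L := by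
  obtain ⟨hLid, ⟨u, hu⟩, -, hLmax⟩ := hL
  have hsup : I ⊔ L = ⊤ := by
    by_contra hne
    exact hIL (le_sup_left.trans (hLmax _ (hLid.sup hI) hne le_sup_right).le)
  obtain ⟨v, hv, w, hw, hvw⟩ := Submodule.mem_sup.mp (hsup ▸ Submodule.mem_top (x := u))
  refine ⟨v, hv, fun a ha => ⟨I.sub_mem (hI v a ha).2 ha, ?_⟩⟩
  have hsplit : a * v - a = (a * u - a) - a * w := by rw [← hvw, mul_add]; abel
  rw [hsplit]
  exact L.sub_mem (hu a) (hLid a w hw)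

variable [SMulCommClass ℂ A A]

def leftColon (I M : Submodule ℂ A) : Submodule ℂ A where
  carrier := {a | ∀ b ∈ I, b * a ∈ M}
  add_mem' hx hy b hb := by rw [mul_add]; exact M.add_mem (hx b hb) (hy b hb)
  zero_mem' b _ := by rw [mul_zero]; exact M.zero_mem
  smul_mem' c x hx b hb := by rw [mul_smul_comm]; exact M.smul_mem c (hx b hb)

theorem le_leftColon_self (hM : ∀ a ∈ I, ∀ x ∈ M, a * x ∈ M) : M ≤ leftColon I M :=
  fun x hx b hb => hM b hb x hx

theorem le_of_mem_leftColon {v : A} (hv : ∀ a ∈ I, a * v - a ∈ M) (hvM : v ∈ leftColon I M) :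
    I ≤ M :=
  fun a ha => by simpa using M.sub_mem (hvM a ha) (hv a ha)

variable (hI : ∀ a : A, ∀ x ∈ I, a * x ∈ I ∧ x * a ∈ I)
include hI

theorem isLeftIdeal_leftColon : IsLeftIdeal (leftColon I M) := fun a x hx b hb => by
  rw [← mul_assoc]
  exact hx _ (hI a b hb).2

theorem le_leftColon_of_inf_le (hL : IsLeftIdeal L) (hLM : I ⊓ L ≤ M) : L ≤ leftColon I M :=
  fun a ha b hb => hLM ⟨(hI a b hb).2, hL b a ha⟩

theorem leftColon_eq_of_isMaximalModularLeftIdeal (hL : IsMaximalModularLeftIdeal L)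
    (hIL : ¬ I ≤ L) (hLM : I ⊓ L ≤ M) (hIM : ¬ I ≤ M) : leftColon I M = L := by
  obtain ⟨v, -, hv⟩ := exists_modular_unit_inf hI hL hIL
  have hne : leftColon I M ≠ ⊤ := fun htop =>
    hIM (le_of_mem_leftColon (fun a ha => hLM (hv a ha)) (htop ▸ Submodule.mem_top))
  exact hL.2.2.2 _ (isLeftIdeal_leftColon hI) hne (le_leftColon_of_inf_le hI hL.1 hLM)

theorem isMaximalModularLeftIdealIn_inf (hL : IsMaximalModularLeftIdeal L) (hIL : ¬ I ≤ L) :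
    IsMaximalModularLeftIdealIn I (I ⊓ L) := by
  refine ⟨inf_le_left, inf_mul_mem_of_isLeftIdeal hI hL.1,
    exists_modular_unit_inf hI hL hIL, fun h => hIL (inf_eq_left.mp h), ?_⟩
  intro N hNI hN hNne hLN
  have hIN : ¬ I ≤ N := fun h => hNne (le_antisymm hNI h)
  have hNL : N ≤ L :=
    leftColon_eq_of_isMaximalModularLeftIdeal hI hL hIL hLN hIN ▸ le_leftColon_self hN
  exact le_antisymm (le_inf hNI hNL) hLN

theorem isMaximalModularLeftIdeal_leftColon (hM : IsMaximalModularLeftIdealIn I M) :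
    IsMaximalModularLeftIdeal (leftColon I M) ∧ ¬ I ≤ leftColon I M ∧
      I ⊓ leftColon I M = M := by
  obtain ⟨hMI, hMid, ⟨e, heI, he⟩, hMne, hMmax⟩ := hM
  have hLid : IsLeftIdeal (leftColon I M) := isLeftIdeal_leftColon hI
  have hmod : ∀ a, a * e - a ∈ leftColon I M := fun a b hb => by
    rw [mul_sub, ← mul_assoc]
    exact he (b * a) (hI a b hb).2
  have heL : e ∉ leftColon I M := fun h => hMne (le_antisymm hMI (le_of_mem_leftColon he h))
  have hIL : ¬ I ≤ leftColon I M := fun h => heL (h heI)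
  have hinf : ∀ L', IsLeftIdeal L' → ¬ I ≤ L' → M ≤ L' → I ⊓ L' = M := fun L' hL' hIL' hML' =>
    hMmax _ inf_le_left (inf_mul_mem_of_isLeftIdeal hI hL')
      (fun h => hIL' (inf_eq_left.mp h)) (le_inf hMI hML')
  have hML : M ≤ leftColon I M := le_leftColon_self hMid
  refine ⟨⟨hLid, ⟨e, hmod⟩, fun h => heL (h ▸ Submodule.mem_top), ?_⟩, hIL,
    hinf _ hLid hIL hML⟩
  intro L' hL' hL'ne hLL'
  have hIL' : ¬ I ≤ L' := fun h =>
    hL'ne (hL'.eq_top_of_unit_mem (fun a => hLL' (hmod a)) (h heI))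
  refine le_antisymm ?_ hLL'
  exact le_leftColon_of_inf_le hI hL' (hinf L' hL' hIL' (hML.trans hLL')).le

end LeftColon

theorem stmt_12_general {A : Type*}
    [NonUnitalNormedRing A] [NormedSpace ℂ A] [SMulCommClass ℂ A A]
    (I : Submodule ℂ A) (hI : ∀ a : A, ∀ x ∈ I, a * x ∈ I ∧ x * a ∈ I) :
    Set.BijOn (fun L : Submodule ℂ A => I ⊓ L)
      {L | IsMaximalModularLeftIdeal L ∧ ¬ I ≤ L}
      {M | IsMaximalModularLeftIdealIn I M} := by
  refine ⟨fun L ⟨hL, hIL⟩ => isMaximalModularLeftIdealIn_inf hI hL hIL, ?_, ?_⟩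
  · rintro L₁ ⟨hL₁, hIL₁⟩ L₂ ⟨hL₂, hIL₂⟩ (heq : I ⊓ L₁ = I ⊓ L₂)
    have hIinf : ¬ I ≤ I ⊓ L₁ := fun h => hIL₁ (h.trans inf_le_right)
    rw [← leftColon_eq_of_isMaximalModularLeftIdeal hI hL₁ hIL₁ le_rfl hIinf,
      leftColon_eq_of_isMaximalModularLeftIdeal hI hL₂ hIL₂ heq.ge hIinf]
  · intro M hM
    obtain ⟨hL, hIL, hinf⟩ := isMaximalModularLeftIdeal_leftColon hI hM
    exact ⟨leftColon I M, ⟨hL, hIL⟩, hinf⟩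

/-- For a closed (two-sided) ideal `I` of a Banach algebra `A`, the map `L ↦ I ∩ L` is a
bijection from the maximal modular left ideals of `A` not containing `I` onto the maximal
modular left ideals of `I`. -/
theorem stmt_12 {A : Type*}
    [NonUnitalNormedRing A] [NormedSpace ℂ A] [IsScalarTower ℂ A A] [SMulCommClass ℂ A A]
    [CompleteSpace A]
    (I : Submodule ℂ A) (hI : ∀ a : A, ∀ x ∈ I, a * x ∈ I ∧ x * a ∈ I)
    (hIc : IsClosed (I : Set A)) :
    Set.BijOn (fun L : Submodule ℂ A => I ⊓ L)
      {L | IsMaximalModularLeftIdeal L ∧ ¬ I ≤ L}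
      {M | IsMaximalModularLeftIdealIn I M} :=
  stmt_12_general I hI
end

section
/- Let A be a C*-algebra, let (G, 𝔄) be a Gelfand theory for A, let L ∈ Λ_𝔄, and let a ∈ A be such that π_{G⁻¹(L)}(a) equals the rank one operator ξ ⊙ G_L*η on the Hilbert space A/G⁻¹(L), where ξ ∈ A/G⁻¹(L) and η ∈ 𝔄/L. Then π_L(G(a)) = G_L ξ ⊙ η. -/
/-! Both sides are continuous in `y`, so it suffices to compare them on the dense set
`G(A) + L`. Since `L` is a left ideal annihilated by `Q`, the `L`-component drops out of both
sides, and on `G x` the identity is the hypothesis on `π_{G⁻¹(L)}(a)` pushed forward along `G_L`,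
using `⟪G_L u, η⟫ = ⟪u, G_L* η⟫`. -/

open scoped Pointwise

open scoped InnerProductSpace

theorem ContinuousLinearMap.map_inner_adjoint_smul {H K : Type*}
    [NormedAddCommGroup H] [InnerProductSpace ℂ H] [CompleteSpace H]
    [NormedAddCommGroup K] [InnerProductSpace ℂ K] [CompleteSpace K]
    (T : H →L[ℂ] K) (x ξ : H) (η : K) :
    T (⟪x, ContinuousLinearMap.adjoint T η⟫_ℂ • ξ) = ⟪T x, η⟫_ℂ • T ξ := by
  rw [map_smul, ContinuousLinearMap.adjoint_inner_right]

theorem IsLeftIdeal.map_mul_add_of_mem {𝔄 K F : Type*} [NonUnitalNonAssocRing 𝔄] [Module ℂ 𝔄]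
    [AddCommGroup K] [FunLike F 𝔄 K] [AddMonoidHomClass F 𝔄 K]
    {L : Submodule ℂ 𝔄} (hL : IsLeftIdeal L) {Q : F} (hQ : ∀ v ∈ L, Q v = 0)
    (b y : 𝔄) {v : 𝔄} (hv : v ∈ L) : Q (b * (y + v)) = Q (b * y) := by
  rw [mul_add, map_add, hQ _ (hL b v hv), add_zero]

/-- The Hilbert spaces `A/G⁻¹(L)` and `𝔄/L` are modelled by `H`, `K` with quotient maps `q`, `Q`,
and `G_L` by `TL`; `π_{G⁻¹(L)}(a) = ξ ⊙ G_L* η` is stated pointwise on `q x`. -/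
theorem stmt_16_general {A 𝔄 : Type*}
    [NonUnitalNormedRing A] [NormedSpace ℂ A]
    [IsScalarTower ℂ A A] [SMulCommClass ℂ A A]
    [NonUnitalNormedRing 𝔄] [StarRing 𝔄] [CStarRing 𝔄] [NormedSpace ℂ 𝔄]
    [IsScalarTower ℂ 𝔄 𝔄] [SMulCommClass ℂ 𝔄 𝔄] [StarModule ℂ 𝔄] [CompleteSpace 𝔄]
    (G : A →ₙₐ[ℂ] 𝔄) (hG : IsGelfandTheory G)
    (L : Submodule ℂ 𝔄) (hL : IsMaximalModularLeftIdeal L)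
    {H K : Type*} [NormedAddCommGroup H] [InnerProductSpace ℂ H] [CompleteSpace H]
    [NormedAddCommGroup K] [InnerProductSpace ℂ K] [CompleteSpace K]
    (q : A →L[ℂ] H) (Q : 𝔄 →L[ℂ] K)
    (hQker : ∀ y : 𝔄, Q y = 0 ↔ y ∈ L)
    (TL : H →L[ℂ] K) (hGLq : ∀ x : A, TL (q x) = Q (G x))
    (a : A) (ξ : H) (η : K)
    (ha : ∀ x : A, q (a * x) = ⟪q x, ContinuousLinearMap.adjoint TL η⟫_ℂ • ξ) :
    ∀ y : 𝔄, Q (G a * y) = ⟪Q y, η⟫_ℂ • TL ξ := by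
  have hQL : ∀ v ∈ L, Q v = 0 := fun v hv => (hQker v).2 hv
  refine congrFun (Continuous.ext_on (hG.2 L hL) (by fun_prop) (by fun_prop) ?_)
  rintro _ ⟨_, ⟨x, rfl⟩, v, hv, rfl⟩
  calc Q (G a * (G x + v)) = Q (G (a * x)) := by
        rw [hL.1.map_mul_add_of_mem hQL _ _ hv, map_mul G]
    _ = TL (⟪q x, ContinuousLinearMap.adjoint TL η⟫_ℂ • ξ) := by rw [← hGLq, ha]
    _ = ⟪Q (G x), η⟫_ℂ • TL ξ := by rw [TL.map_inner_adjoint_smul, hGLq]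
    _ = ⟪Q (G x + v), η⟫_ℂ • TL ξ := by rw [map_add, hQL v hv, add_zero]

/-- Rank-one behaviour of Gelfand transforms of C*-algebras. The Hilbert-space quotients
`A/G⁻¹(L)` and `𝔄/L` are modelled by Hilbert spaces `H`, `K` together with the (continuous)
quotient maps `q : A → H`, `Q : 𝔄 → K` (surjective, with kernels `G⁻¹(L)` and `L`), and
the induced map `𝒢L : H → K` (with `𝒢L ∘ q = Q ∘ G`, dense range). If
`π_{G⁻¹(L)}(a) = ξ ⊙ 𝒢L* η`, i.e. `q (a * x) = ⟪q x, 𝒢L* η⟫ • ξ` for all `x`, then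
`π_L(G a) = 𝒢L ξ ⊙ η`, i.e. `Q (G a * y) = ⟪Q y, η⟫ • 𝒢L ξ` for all `y`. -/
theorem stmt_16 {A 𝔄 : Type*}
    [NonUnitalNormedRing A] [StarRing A] [CStarRing A] [NormedSpace ℂ A]
    [IsScalarTower ℂ A A] [SMulCommClass ℂ A A] [StarModule ℂ A] [CompleteSpace A]
    [NonUnitalNormedRing 𝔄] [StarRing 𝔄] [CStarRing 𝔄] [NormedSpace ℂ 𝔄]
    [IsScalarTower ℂ 𝔄 𝔄] [SMulCommClass ℂ 𝔄 𝔄] [StarModule ℂ 𝔄] [CompleteSpace 𝔄]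
    (G : A →ₙₐ[ℂ] 𝔄) (hG : IsGelfandTheory G)
    (L : Submodule ℂ 𝔄) (hL : IsMaximalModularLeftIdeal L)
    {H K : Type*} [NormedAddCommGroup H] [InnerProductSpace ℂ H] [CompleteSpace H]
    [NormedAddCommGroup K] [InnerProductSpace ℂ K] [CompleteSpace K]
    (q : A →L[ℂ] H) (Q : 𝔄 →L[ℂ] K)
    (hqs : Function.Surjective ⇑q) (hQs : Function.Surjective ⇑Q)
    (hqker : ∀ x : A, q x = 0 ↔ G x ∈ L) (hQker : ∀ y : 𝔄, Q y = 0 ↔ y ∈ L)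
    (TL : H →L[ℂ] K) (hGLq : ∀ x : A, TL (q x) = Q (G x)) (hGLd : DenseRange ⇑TL)
    (a : A) (ξ : H) (η : K)
    (ha : ∀ x : A, q (a * x) = ⟪q x, ContinuousLinearMap.adjoint TL η⟫_ℂ • ξ) :
    ∀ y : 𝔄, Q (G a * y) = ⟪Q y, η⟫_ℂ • TL ξ :=
  stmt_16_general G hG L hL q Q hQker TL hGLq a ξ η ha
end
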